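/- Let n ≥ 1 be an integer and 0 < ε < π. Then ∫_0^ε (cos κ − cos ε)^{(n−2)/2} cos(nκ/2) dκ = 2^{−n/2} √π · (Γ(n/2)/Γ((n+1)/2)) · (sin ε)^{n−1}. -/

import Mathlib

/-!
Write `b = n / 2` and `I(b) = ∫_0^ε (cos κ - cos ε)^(b-1) cos(bκ) dκ`. For `b > 0` the
function `(cos κ - cos ε)^b (sin((b+1)κ) - cos ε sin(bκ))` vanishes at `κ = 0` and `κ = ε`,
and its derivative is `(2b+1)` times the integrand of `I(b+1)` minus `b sin²ε` times that of
`I(b)`; hence `I(b+1) = b sin²ε / (2b+1) · I(b)`. By `Γ(x+1) = xΓ(x)` the closed form obeys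
the same recursion, so it remains to treat `b = 1`, where the integrand is `cos κ`, and
`b = 1/2`, where `cos κ - cos ε = 2 (sin²(ε/2) - sin²(κ/2))` makes
`√2 arcsin(sin(κ/2) / sin(ε/2))` an antiderivative.
-/

open Real MeasureTheory Set intervalIntegral

namespace MehlerDirichlet

noncomputable def integrand (b ε κ : ℝ) : ℝ := (cos κ - cos ε) ^ (b - 1) * cos (b * κ)

noncomputable def closedForm (b ε : ℝ) : ℝ :=
  2 ^ (-b) * √π * (Gamma b / Gamma (b + 1 / 2)) * sin ε ^ (2 * b - 1)

def HasClosedForm (b ε : ℝ) : Prop :=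
  IntervalIntegrable (integrand b ε) volume 0 ε ∧
    ∫ κ in (0 : ℝ)..ε, integrand b ε κ = closedForm b ε

lemma cos_sub_cos_pos {ε x : ℝ} (hεπ : ε ≤ π) (hx : x ∈ Ioo 0 ε) : 0 < cos x - cos ε :=
  sub_pos.2 (cos_lt_cos_of_nonneg_of_le_pi hx.1.le hεπ hx.2)

lemma cos_sub_cos_eq (x ε : ℝ) : cos x - cos ε = 2 * (sin (ε / 2) ^ 2 - sin (x / 2) ^ 2) := by
  have (y : ℝ) : cos y = 1 - 2 * sin (y / 2) ^ 2 := by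
    have h := cos_two_mul' (y / 2)
    rw [mul_div_cancel₀ _ two_ne_zero] at h
    linear_combination h + sin_sq_add_cos_sq (y / 2)
  rw [this x, this ε]
  ring

lemma continuous_integrand {b : ℝ} (hb : 1 ≤ b) (ε : ℝ) : Continuous (integrand b ε) :=
  ((continuous_cos.sub continuous_const).rpow_const fun _ => Or.inr (by linarith)).mul
    (continuous_cos.comp (continuous_const.mul continuous_id))

lemma hasDerivAt_reduction {b ε x : ℝ} (hx : 0 < cos x - cos ε) :
    HasDerivAt (fun κ => (cos κ - cos ε) ^ b * (sin ((b + 1) * κ) - cos ε * sin (b * κ)))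
      ((2 * b + 1) * integrand (b + 1) ε x - b * sin ε ^ 2 * integrand b ε x) x := by
  have hsin (a : ℝ) : HasDerivAt (fun κ => sin (a * κ)) (cos (a * x) * a) x := by
    simpa using ((hasDerivAt_id x).const_mul a).sin
  have hpow := ((hasDerivAt_cos x).sub_const (cos ε)).rpow_const (p := b) (Or.inl hx.ne')
  refine (hpow.mul ((hsin (b + 1)).sub ((hsin b).const_mul (cos ε)))).congr_deriv ?_
  have hsplit : (cos x - cos ε) ^ b = (cos x - cos ε) ^ (b - 1) * (cos x - cos ε) := by
    rw [← rpow_add_one hx.ne', sub_add_cancel]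
  simp only [integrand, Pi.sub_apply, add_sub_cancel_right, hsplit, sin_sq, add_mul, one_mul,
    sin_add, cos_add]
  linear_combination (-b * cos (b * x) * (cos x - cos ε) ^ (b - 1)) * sin_sq_add_cos_sq x

lemma integral_integrand_add_one {b ε : ℝ} (hb : 0 < b) (hε0 : 0 ≤ ε) (hεπ : ε ≤ π)
    (hint : IntervalIntegrable (integrand b ε) volume 0 ε) :
    ∫ κ in (0 : ℝ)..ε, integrand (b + 1) ε κ =
      b * sin ε ^ 2 / (2 * b + 1) * ∫ κ in (0 : ℝ)..ε, integrand b ε κ := by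
  have hint' : IntervalIntegrable (integrand (b + 1) ε) volume 0 ε :=
    (continuous_integrand (by linarith) ε).intervalIntegrable 0 ε
  have hcont : Continuous
      fun κ => (cos κ - cos ε) ^ b * (sin ((b + 1) * κ) - cos ε * sin (b * κ)) :=
    ((continuous_cos.sub continuous_const).rpow_const fun _ => Or.inr hb.le).mul (by fun_prop)
  have hftc := integral_eq_sub_of_hasDerivAt_of_le hε0 hcont.continuousOn
    (fun x hx => hasDerivAt_reduction (cos_sub_cos_pos hεπ hx))
    ((hint'.const_mul _).sub (hint.const_mul _))
  rw [integral_sub (hint'.const_mul _) (hint.const_mul _), intervalIntegral.integral_const_mul,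
    intervalIntegral.integral_const_mul] at hftc
  simp [zero_rpow hb.ne'] at hftc
  field_simp
  linarith

lemma closedForm_add_one {b ε : ℝ} (hb : 0 < b) (hε0 : 0 ≤ ε) (hεπ : ε ≤ π) :
    closedForm (b + 1) ε = b * sin ε ^ 2 / (2 * b + 1) * closedForm b ε := by
  have hΓ : Gamma (b + 1 / 2) ≠ 0 := (Gamma_pos_of_pos (by linarith)).ne'
  have hsin : sin ε ^ (2 * (b + 1) - 1) = sin ε ^ (2 * b - 1) * sin ε ^ 2 := by
    rw [show 2 * (b + 1) - 1 = 2 * b - 1 + (2 : ℕ) by push_cast; ring,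
      rpow_add' (sin_nonneg_of_nonneg_of_le_pi hε0 hεπ) (by push_cast; linarith), rpow_natCast]
  rw [closedForm, closedForm, hsin, neg_add, rpow_add two_pos, rpow_neg_one,
    show b + 1 + 1 / 2 = b + 1 / 2 + 1 by ring, Gamma_add_one hb.ne',
    Gamma_add_one (by linarith)]
  field_simp

lemma HasClosedForm.add_one {b ε : ℝ} (h : HasClosedForm b ε) (hb : 0 < b) (hε0 : 0 ≤ ε)
    (hεπ : ε ≤ π) : HasClosedForm (b + 1) ε :=
  ⟨(continuous_integrand (by linarith) ε).intervalIntegrable 0 ε, by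
    rw [integral_integrand_add_one hb hε0 hεπ h.1, h.2, closedForm_add_one hb hε0 hεπ]⟩

lemma hasClosedForm_one (ε : ℝ) : HasClosedForm 1 ε := by
  have h : integrand 1 ε = cos := funext fun κ => by simp [integrand]
  refine ⟨h ▸ continuous_cos.intervalIntegrable 0 ε, ?_⟩
  rw [h, integral_cos, closedForm, show (1 : ℝ) + 1 / 2 = 1 / 2 + 1 by norm_num,
    Gamma_add_one (by norm_num), Gamma_one_half_eq, Gamma_one]
  norm_num
  field_simp

lemma hasDerivAt_sqrt_two_mul_arcsin {ε x : ℝ} (hs : 0 < sin (ε / 2))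
    (hx : sin (x / 2) ^ 2 < sin (ε / 2) ^ 2) :
    HasDerivAt (fun κ => √2 * arcsin (sin (κ / 2) / sin (ε / 2)))
      (integrand (1 / 2) ε x) x := by
  set s := sin (ε / 2)
  set u := sin (x / 2)
  have hus : |u / s| < 1 := by
    rw [abs_div, abs_of_pos hs, div_lt_one hs, ← abs_of_pos hs, ← sq_lt_sq]
    exact hx
  have harcsin := hasDerivAt_arcsin (x := u / s) (by linarith [(abs_lt.1 hus).1])
    (by linarith [(abs_lt.1 hus).2])
  refine ((harcsin.comp x (((hasDerivAt_id x).div_const 2).sin.div_const s)).const_mul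
    √2).congr_deriv ?_
  have hq : 0 < s ^ 2 - u ^ 2 := by linarith
  have hsqrt : √(1 - (u / s) ^ 2) = √(s ^ 2 - u ^ 2) / s := by
    rw [div_pow, one_sub_div (by positivity), sqrt_div hq.le, sqrt_sq hs.le]
  have hrpow : (cos x - cos ε) ^ (1 / 2 - 1 : ℝ) = (√2 * √(s ^ 2 - u ^ 2))⁻¹ := by
    rw [cos_sub_cos_eq, ← sqrt_mul zero_le_two, sqrt_eq_rpow, ← rpow_neg (by positivity)]
    norm_num
    rfl
  simp only [integrand, hrpow, hsqrt, id]
  field_simp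
  rw [sq_sqrt zero_le_two]

lemma hasClosedForm_one_half {ε : ℝ} (hε0 : 0 < ε) (hεπ : ε ≤ π) :
    HasClosedForm (1 / 2) ε := by
  have hs : 0 < sin (ε / 2) := sin_pos_of_pos_of_lt_pi (by linarith) (by linarith [pi_pos])
  have hderiv (x : ℝ) (hx : x ∈ Ioo 0 ε) :
      HasDerivAt (fun κ => √2 * arcsin (sin (κ / 2) / sin (ε / 2)))
        (integrand (1 / 2) ε x) x :=
    hasDerivAt_sqrt_two_mul_arcsin hs
      (by linarith [cos_sub_cos_pos hεπ hx, cos_sub_cos_eq x ε])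
  have hnonneg (x : ℝ) (hx : x ∈ Ioo 0 ε) : 0 ≤ integrand (1 / 2) ε x :=
    mul_nonneg (rpow_nonneg (cos_sub_cos_pos hεπ hx).le _)
      (cos_nonneg_of_mem_Icc ⟨by linarith [hx.1, pi_pos], by linarith [hx.2]⟩)
  have hcont : ContinuousOn (fun κ => √2 * arcsin (sin (κ / 2) / sin (ε / 2))) (Icc 0 ε) :=
    (by fun_prop : Continuous _).continuousOn
  have hint : IntervalIntegrable (integrand (1 / 2) ε) volume 0 ε := by
    apply intervalIntegrable_deriv_of_nonneg (uIcc_of_le hε0.le ▸ hcont) <;>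
      rwa [min_eq_left hε0.le, max_eq_right hε0.le]
  refine ⟨hint, ?_⟩
  rw [integral_eq_sub_of_hasDerivAt_of_le hε0.le hcont hderiv hint, div_self hs.ne', zero_div,
    sin_zero, zero_div, arcsin_one, arcsin_zero, closedForm, Gamma_one_half_eq,
    show (1 / 2 : ℝ) + 1 / 2 = 1 by norm_num, Gamma_one,
    show 2 * (1 / 2 : ℝ) - 1 = 0 by norm_num, rpow_zero, rpow_neg zero_le_two, ← sqrt_eq_rpow]
  field_simp
  rw [sq_sqrt zero_le_two, sq_sqrt pi_pos.le]
  ring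

theorem hasClosedForm_half_nat {ε : ℝ} (hε0 : 0 < ε) (hεπ : ε ≤ π) :
    ∀ n : ℕ, 1 ≤ n → HasClosedForm (n / 2) ε
  | 1, _ => by simpa using hasClosedForm_one_half hε0 hεπ
  | 2, _ => by simpa using hasClosedForm_one ε
  | n + 3, _ => by
    have h := (hasClosedForm_half_nat hε0 hεπ (n + 1) (by omega)).add_one (by positivity)
      hε0.le hεπ
    convert h using 2
    push_cast
    ring

end MehlerDirichlet

open MehlerDirichlet in
/-- For `n ≥ 1` and `0 < ε < π`, the Mehler–Dirichlet type integral
`∫_0^ε (cos κ - cos ε)^{(n-2)/2} cos(nκ/2) dκ` converges absolutely and equals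
`2^{-n/2} √π (Γ(n/2)/Γ((n+1)/2)) (sin ε)^{n-1}`. -/
theorem mehler_dirichlet_integral (n : ℕ) (hn : 1 ≤ n) (ε : ℝ) (hε0 : 0 < ε)
    (hεπ : ε < Real.pi) :
    IntervalIntegrable
      (fun κ : ℝ => (Real.cos κ - Real.cos ε) ^ (((n : ℝ) - 2) / 2) *
        Real.cos ((n : ℝ) * κ / 2)) MeasureTheory.volume 0 ε ∧
    ∫ κ in (0 : ℝ)..ε,
        (Real.cos κ - Real.cos ε) ^ (((n : ℝ) - 2) / 2) * Real.cos ((n : ℝ) * κ / 2) =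
      (2 : ℝ) ^ (-(n : ℝ) / 2) * Real.sqrt Real.pi *
        (Real.Gamma ((n : ℝ) / 2) / Real.Gamma (((n : ℝ) + 1) / 2)) *
        Real.sin ε ^ (n - 1) := by
  have hintegrand : integrand (n / 2) ε =
      fun κ => (cos κ - cos ε) ^ (((n : ℝ) - 2) / 2) * cos ((n : ℝ) * κ / 2) := by
    ext κ
    rw [integrand]
    ring_nf
  have hsin : sin ε ^ (2 * ((n : ℝ) / 2) - 1) = sin ε ^ (n - 1) := by
    rw [← rpow_natCast, Nat.cast_sub hn]
    ring_nf
  simpa only [HasClosedForm, closedForm, hintegrand, hsin, neg_div, add_div] using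
    hasClosedForm_half_nat hε0 hεπ.le n hn
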